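/- Let t ∈ GL_n(ℂ) be a diagonal matrix with pairwise distinct diagonal entries and let u be a unipotent upper triangular matrix. Then there exists a unipotent upper triangular matrix v such that t·u = v^{-1}·t·v. In particular, t·u is conjugate to t in GL_n(ℂ). -/

import Mathlib

/-!
Row `i` of `v` must be a left eigenvector of `diagonal d * u` for the eigenvalue `d i`,
normalised by `v i i = 1` and supported on the columns `j ≥ i`. Because `diagonal d * u` is upper
triangular with diagonal `d`, comparing the `(i, j)` entries of `v * (diagonal d * u)` and
`diagonal d * v` determines `v i j` from the entries `v i k`, `k < j`, after division by
`d i - d j`; this is where the distinctness of the `d i` enters. The resulting `v` is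
upper unitriangular, hence invertible.
-/

open Matrix

section Conjugator

variable {K ι : Type*} [Field K] [Fintype ι] [LinearOrder ι]

attribute [local instance] WellFoundedLT.toWellFoundedRelation in
def unitriangularConjugator (d : ι → K) (u : Matrix ι ι K) : Matrix ι ι K
  | i, j =>
    if i < j then
      (∑ k, if k < j then unitriangularConjugator d u i k * d k * u k j else 0) / (d i - d j)
    else if i = j then 1 else 0
termination_by _ j => j
decreasing_by assumption

variable (d : ι → K) (u : Matrix ι ι K)

local notation "v" => unitriangularConjugator d u

theorem unitriangularConjugator_apply_self (i : ι) : v i i = 1 := by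
  rw [unitriangularConjugator, if_neg (lt_irrefl i), if_pos rfl]

theorem unitriangularConjugator_apply_of_lt {i j : ι} (h : j < i) : v i j = 0 := by
  rw [unitriangularConjugator, if_neg h.not_gt, if_neg h.ne']

theorem isUpperTriangular_unitriangularConjugator : (v).IsUpperTriangular :=
  fun _ _ h => unitriangularConjugator_apply_of_lt d u h

theorem det_unitriangularConjugator : (v).det = 1 := by
  rw [det_of_isUpperTriangular (isUpperTriangular_unitriangularConjugator d u)]
  simp [unitriangularConjugator_apply_self]

variable {d}

theorem sum_lt_unitriangularConjugator_mul (hd : Function.Injective d) (i j : ι) :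
    (∑ k, if k < j then v i k * d k * u k j else 0) = v i j * (d i - d j) := by
  by_cases hij : i < j
  · have hne : d i - d j ≠ 0 := sub_ne_zero.mpr (hd.ne hij.ne)
    rw [unitriangularConjugator, if_pos hij, div_mul_cancel₀ _ hne]
  · have hvanish : ∀ k, (if k < j then v i k * d k * u k j else 0) = 0 := fun k => by
      split_ifs with hkj
      · rw [unitriangularConjugator_apply_of_lt d u (hkj.trans_le (not_lt.mp hij)),
          zero_mul, zero_mul]
      · rfl
    rcases (not_lt.mp hij).eq_or_lt with rfl | hji
    · simp [hvanish]
    · simp [hvanish, unitriangularConjugator_apply_of_lt d u hji]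

theorem unitriangularConjugator_mul_diagonal_mul (hd : Function.Injective d)
    (hu : u.IsUpperTriangular) (hu1 : ∀ i, u i i = 1) :
    v * (diagonal d * u) = diagonal d * v := by
  ext i j
  have hsplit : ∀ k, v i k * (d k * u k j)
      = (if k < j then v i k * d k * u k j else 0) + (if k = j then v i j * d j else 0) :=
    fun k => by
      rcases lt_trichotomy k j with hkj | rfl | hjk
      · simp [hkj, hkj.ne, mul_assoc]
      · simp [hu1]
      · simp [hjk.not_gt, hjk.ne', hu hjk]
  rw [mul_apply]
  simp only [diagonal_mul, hsplit, Finset.sum_add_distrib,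
    sum_lt_unitriangularConjugator_mul u hd, Finset.sum_ite_eq', Finset.mem_univ, if_true]
  ring

end Conjugator

theorem t_mul_unipotent_conjugate_to_t_general (n : ℕ) (d : Fin n → ℂ)
    (hd : Function.Injective d)
    (u : Matrix (Fin n) (Fin n) ℂ)
    (hu1 : ∀ i, u i i = 1) (hu0 : ∀ i j : Fin n, j < i → u i j = 0) :
    ∃ v : Matrix (Fin n) (Fin n) ℂ,
      (∀ i, v i i = 1) ∧ (∀ i j : Fin n, j < i → v i j = 0) ∧
      Matrix.diagonal d * u = v⁻¹ * Matrix.diagonal d * v := by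
  set v := unitriangularConjugator d u
  have hconj : v * (diagonal d * u) = diagonal d * v :=
    unitriangularConjugator_mul_diagonal_mul u hd (fun i j h => hu0 i j h) hu1
  have hunit : IsUnit v.det := by
    rw [det_unitriangularConjugator]
    exact isUnit_one
  refine ⟨v, unitriangularConjugator_apply_self d u,
    fun _ _ h => unitriangularConjugator_apply_of_lt d u h, ?_⟩
  rw [mul_assoc, ← hconj, ← mul_assoc, nonsing_inv_mul v hunit, one_mul]

/-- For a diagonal matrix `t` with pairwise distinct (nonzero) diagonal entries
and a unipotent upper triangular matrix `u`, there is a unipotent upper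
triangular `v` with `t * u = v⁻¹ * t * v`; in particular `t * u` is conjugate
to `t`. -/
theorem t_mul_unipotent_conjugate_to_t (n : ℕ) (d : Fin n → ℂ)
    (hd0 : ∀ i, d i ≠ 0) (hd : Function.Injective d)
    (u : Matrix (Fin n) (Fin n) ℂ)
    (hu1 : ∀ i, u i i = 1) (hu0 : ∀ i j : Fin n, j < i → u i j = 0) :
    ∃ v : Matrix (Fin n) (Fin n) ℂ,
      (∀ i, v i i = 1) ∧ (∀ i j : Fin n, j < i → v i j = 0) ∧
      Matrix.diagonal d * u = v⁻¹ * Matrix.diagonal d * v :=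
  t_mul_unipotent_conjugate_to_t_general n d hd u hu1 hu0
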